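/- Let N ∈ ℕ, let f : [0,1] → ℝ^N be continuous, and set L := ∫_0^1 ‖f(t)‖ dt. Then the family ((S^I(f))^2), indexed by all multi-indices I of all lengths m ≥ 0 with entries in {1,…,N}, is summable, and Σ_{m≥0} Σ_{|I|=m} (S^I(f))^2 ≤ Σ_{m≥0} N^m L^{2m} / (m!)^2 < ∞. (The path signature has finite norm: S(γ) lies in the subspace T_1((𝔤)) of the tensor algebra consisting of tensors with finite ℓ²-norm and zeroth component 1.) -/

import Mathlib

/-!
Each signature coefficient of length `m` is bounded by the integral of `∏ⱼ ‖f(tⱼ)‖` over the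
simplex, and that integral is at most `Lᵐ / m!`: the `m!` permuted copies of the simplex tile the
cube `[0,1]ᵐ` up to a null set, and the integrand is symmetric, so `m!` times it is at most the
integral over the cube, `Lᵐ`. Squaring and summing over the `Nᵐ` multi-indices of length `m`
gives the majorant, which is dominated by the exponential series of `N L²`.
-/

open MeasureTheory

/-- The simplex of nondecreasing `m`-tuples with entries in `[0,1]`. -/
def simplex (m : ℕ) : Set (Fin m → ℝ) :=
  {t | (∀ j, t j ∈ Set.Icc (0:ℝ) 1) ∧ ∀ j k : Fin m, j ≤ k → t j ≤ t k}

/-- The signature coefficient of `f : [0,1] → ℝ^N` (Euclidean norm on `ℝ^N`) with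
respect to a multi-index `I`; for the empty multi-index it equals `1`. -/
noncomputable def sig {N : ℕ} (f : ℝ → EuclideanSpace ℝ (Fin N)) {m : ℕ}
    (I : Fin m → Fin N) : ℝ :=
  ∫ t in simplex m, ∏ j, f (t j) (I j)

open Set
open scoped Nat

lemma isClosed_simplex (m : ℕ) : IsClosed (simplex m) := by
  simp only [simplex, ofPred_and, ofPred_forall]
  exact (isClosed_iInter fun j => isClosed_Icc.preimage (continuous_apply j)).inter
    (isClosed_iInter fun j => isClosed_iInter fun k => isClosed_iInter fun _ =>
      isClosed_le (continuous_apply j) (continuous_apply k))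

lemma isCompact_simplex (m : ℕ) : IsCompact (simplex m) :=
  (isCompact_univ_pi fun _ => isCompact_Icc).of_isClosed_subset (isClosed_simplex m)
    fun _ ht j _ => ht.1 j

def strictSimplex (m : ℕ) : Set (Fin m → ℝ) :=
  {t | (∀ j, t j ∈ Icc (0:ℝ) 1) ∧ StrictMono t}

lemma measurableSet_strictSimplex (m : ℕ) : MeasurableSet (strictSimplex m) := by
  simp only [strictSimplex, StrictMono, ofPred_and, ofPred_forall]
  exact (MeasurableSet.iInter fun j => measurableSet_Icc.preimage (measurable_pi_apply j)).inter
    (MeasurableSet.iInter fun j => MeasurableSet.iInter fun k => MeasurableSet.iInter fun _ =>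
      measurableSet_lt (measurable_pi_apply j) (measurable_pi_apply k))

lemma volume_setOf_apply_eq_apply {ι : Type*} [Fintype ι] {j k : ι} (hjk : j ≠ k) :
    volume {t : ι → ℝ | t j = t k} = 0 := by
  classical
  let d : (ι → ℝ) →ₗ[ℝ] ℝ := (LinearMap.proj j : (ι → ℝ) →ₗ[ℝ] ℝ) - LinearMap.proj k
  have hker : {t : ι → ℝ | t j = t k} = LinearMap.ker d := by
    ext t
    simp [d, sub_eq_zero]
  rw [hker]
  refine Measure.addHaar_submodule _ _ fun h => ?_
  have := (Submodule.eq_top_iff'.1 h) (Pi.single j 1)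
  simp [d, hjk.symm] at this

lemma strictSimplex_ae_eq_simplex (m : ℕ) : strictSimplex m =ᵐ[volume] simplex m := by
  have hsub : strictSimplex m ⊆ simplex m := fun t ht =>
    ⟨ht.1, fun _ _ hjk => ht.2.monotone hjk⟩
  have hdiff : simplex m \ strictSimplex m ⊆ ⋃ (j) (k) (_ : j ≠ k), {t | t j = t k} := by
    rintro t ⟨ht, hts⟩
    have hmono : Monotone t := fun j k hjk => ht.2 j k hjk
    obtain ⟨j, k, hjk, hne⟩ : ∃ j k, t j = t k ∧ j ≠ k := by
      by_contra! hinj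
      exact hts ⟨ht.1, hmono.strictMono_of_injective fun j k => hinj j k⟩
    simp only [mem_iUnion]
    exact ⟨j, k, hne, hjk⟩
  refine ae_eq_set.2 ⟨by simp [sdiff_eq_empty.2 hsub], measure_mono_null hdiff ?_⟩
  exact measure_iUnion_null fun j => measure_iUnion_null fun k =>
    measure_iUnion_null fun hjk => volume_setOf_apply_eq_apply hjk

/-- Both reorderings of a tuple in the intersection would be the increasing enumeration of its
range. -/
lemma pairwise_disjoint_preimage_strictSimplex (m : ℕ) :
    Pairwise (Function.onFun Disjoint fun σ : Equiv.Perm (Fin m) =>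
      (· ∘ σ) ⁻¹' strictSimplex m) := by
  intro σ τ hστ
  refine disjoint_left.2 fun t hσ hτ => hστ ?_
  have hrange : range (t ∘ σ) = range (t ∘ τ) := by
    rw [range_comp, range_comp, σ.range_eq_univ, τ.range_eq_univ]
  have heq : t ∘ σ = t ∘ τ := (hσ.2.range_inj hτ.2).1 hrange
  have ht : Function.Injective t := hσ.2.injective.of_comp_right σ.surjective
  exact Equiv.ext fun j => ht (congrFun heq j)

lemma setIntegral_preimage_comp_perm {ι α E : Type*} [Fintype ι] [MeasureSpace α]
    [SigmaFinite (volume : Measure α)] [NormedAddCommGroup E] [NormedSpace ℝ E]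
    (σ : Equiv.Perm ι) {G : (ι → α) → E} (hG : ∀ t, G (t ∘ σ) = G t) (s : Set (ι → α)) :
    ∫ t in (· ∘ σ) ⁻¹' s, G t = ∫ t in s, G t := by
  have he : ⇑(MeasurableEquiv.piCongrLeft (fun _ : ι => α) σ.symm) = (· ∘ σ) := by
    funext t j
    simpa using MeasurableEquiv.piCongrLeft_apply_apply (β := fun _ => α) σ.symm t (σ j)
  have := (volume_measurePreserving_piCongrLeft (fun _ : ι => α) σ.symm).setIntegral_preimage_emb
    (MeasurableEquiv.piCongrLeft (fun _ : ι => α) σ.symm).measurableEmbedding G s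
  simpa only [he, hG] using this

lemma factorial_mul_setIntegral_simplex_prod_le {g : ℝ → ℝ} (hg : Integrable g) (hg0 : 0 ≤ g)
    (m : ℕ) : m ! * ∫ t in simplex m, ∏ j, g (t j) ≤ (∫ x, g x) ^ m := by
  set G : (Fin m → ℝ) → ℝ := fun t => ∏ j, g (t j)
  have hG : Integrable G := Integrable.fintype_prod fun _ => hg
  have hG_perm (σ : Equiv.Perm (Fin m)) (t : Fin m → ℝ) : G (t ∘ σ) = G t :=
    Equiv.prod_comp σ fun j => g (t j)
  have hmeas (σ : Equiv.Perm (Fin m)) : MeasurableSet ((· ∘ σ) ⁻¹' strictSimplex m) :=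
    (measurableSet_strictSimplex m).preimage (by fun_prop)
  calc m ! * ∫ t in simplex m, G t
      = ∑ σ : Equiv.Perm (Fin m), ∫ t in (· ∘ σ) ⁻¹' strictSimplex m, G t := by
        simp only [setIntegral_preimage_comp_perm _ (hG_perm _),
          setIntegral_congr_set (strictSimplex_ae_eq_simplex m), Finset.sum_const,
          Finset.card_univ, Fintype.card_perm, Fintype.card_fin, nsmul_eq_mul]
    _ = ∫ t in ⋃ σ : Equiv.Perm (Fin m), (· ∘ σ) ⁻¹' strictSimplex m, G t :=
        (integral_iUnion_fintype hmeas (pairwise_disjoint_preimage_strictSimplex m)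
          fun _ => hG.integrableOn).symm
    _ ≤ ∫ t, G t :=
        setIntegral_le_integral hG (.of_forall fun t => Finset.prod_nonneg fun j _ => hg0 _)
    _ = (∫ x, g x) ^ m := by simpa [volume_pi] using integral_fintype_prod_eq_pow (ι := Fin m) g

lemma setIntegral_simplex_prod_le {g : ℝ → ℝ} (hg : IntegrableOn g (Icc 0 1))
    (hg0 : ∀ x ∈ Icc (0:ℝ) 1, 0 ≤ g x) (m : ℕ) :
    ∫ t in simplex m, ∏ j, g (t j) ≤ (∫ x in (0:ℝ)..1, g x) ^ m / m ! := by
  rw [le_div_iff₀ (by positivity), mul_comm]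
  calc m ! * ∫ t in simplex m, ∏ j, g (t j)
      = m ! * ∫ t in simplex m, ∏ j, (Icc 0 1).indicator g (t j) := by
        congr 1
        exact setIntegral_congr_fun (isClosed_simplex m).measurableSet fun t ht =>
          Finset.prod_congr rfl fun j _ => (indicator_of_mem (ht.1 j) g).symm
    _ ≤ (∫ x, (Icc 0 1).indicator g x) ^ m :=
        factorial_mul_setIntegral_simplex_prod_le
          ((integrable_indicator_iff measurableSet_Icc).2 hg) (indicator_nonneg hg0) m
    _ = (∫ x in (0:ℝ)..1, g x) ^ m := by
        rw [integral_indicator measurableSet_Icc, intervalIntegral.integral_of_le zero_le_one,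
          integral_Icc_eq_integral_Ioc]

lemma abs_sig_le {N : ℕ} {f : ℝ → EuclideanSpace ℝ (Fin N)} (hf : ContinuousOn f (Icc 0 1))
    {m : ℕ} (I : Fin m → Fin N) : |sig f I| ≤ (∫ t in (0:ℝ)..1, ‖f t‖) ^ m / m ! := by
  have hf_comp (j : Fin m) : ContinuousOn (fun t : Fin m → ℝ => f (t j)) (simplex m) :=
    hf.comp (continuous_apply j).continuousOn fun t ht => ht.1 j
  have hcont : ContinuousOn (fun t : Fin m → ℝ => ∏ j, f (t j) (I j)) (simplex m) :=
    continuousOn_finsetProd _ fun j _ =>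
      (EuclideanSpace.proj (I j)).continuous.comp_continuousOn (hf_comp j)
  have hcont_norm : ContinuousOn (fun t : Fin m → ℝ => ∏ j, ‖f (t j)‖) (simplex m) :=
    continuousOn_finsetProd _ fun j _ => (hf_comp j).norm
  calc |sig f I| ≤ ∫ t in simplex m, ‖∏ j, f (t j) (I j)‖ :=
        (Real.norm_eq_abs _).symm.trans_le (norm_integral_le_integral_norm _)
    _ ≤ ∫ t in simplex m, ∏ j, ‖f (t j)‖ :=
        setIntegral_mono_on (hcont.norm.integrableOn_compact (isCompact_simplex m))
          (hcont_norm.integrableOn_compact (isCompact_simplex m))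
          (isClosed_simplex m).measurableSet fun t _ => by
            rw [norm_prod]
            exact Finset.prod_le_prod (fun _ _ => norm_nonneg _) fun j _ => PiLp.norm_apply_le _ _
    _ ≤ (∫ t in (0:ℝ)..1, ‖f t‖) ^ m / m ! :=
        setIntegral_simplex_prod_le (hf.norm.integrableOn_compact isCompact_Icc)
          (fun _ _ => norm_nonneg _) m

lemma sum_sig_sq_le {N : ℕ} {f : ℝ → EuclideanSpace ℝ (Fin N)} (hf : ContinuousOn f (Icc 0 1))
    (m : ℕ) : ∑ I : Fin m → Fin N, sig f I ^ 2 ≤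
      (N : ℝ) ^ m * (∫ t in (0:ℝ)..1, ‖f t‖) ^ (2 * m) / (m ! : ℝ) ^ 2 := by
  calc ∑ I : Fin m → Fin N, sig f I ^ 2
      ≤ ∑ _I : Fin m → Fin N, ((∫ t in (0:ℝ)..1, ‖f t‖) ^ m / m !) ^ 2 :=
        Finset.sum_le_sum fun I _ =>
          (sq_abs _).symm.trans_le (pow_le_pow_left₀ (abs_nonneg _) (abs_sig_le hf I) 2)
    _ = (N : ℝ) ^ m * (∫ t in (0:ℝ)..1, ‖f t‖) ^ (2 * m) / (m ! : ℝ) ^ 2 := by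
        simp only [Finset.sum_const, Finset.card_univ, Fintype.card_fun, Fintype.card_fin,
          nsmul_eq_mul]
        push_cast
        ring

lemma summable_pow_div_factorial_sq (x : ℝ) : Summable fun m : ℕ => x ^ m / (m ! : ℝ) ^ 2 :=
  (Real.summable_pow_div_factorial |x|).of_norm_bounded fun m => by
    rw [norm_div, norm_pow, norm_pow, Real.norm_eq_abs, Real.norm_natCast]
    exact div_le_div_of_nonneg_left (by positivity) (by positivity)
      (le_self_pow₀ (Nat.one_le_cast.2 m.factorial_pos) two_ne_zero)

section SigmaSum

variable {ι : Type*} {β : ι → Type*} [∀ i, Fintype (β i)] {F : (Σ i, β i) → ℝ} {b : ι → ℝ}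

lemma summable_sigma_of_sum_le (hF : 0 ≤ F) (hb : Summable b) (h : ∀ i, ∑ x, F ⟨i, x⟩ ≤ b i) :
    Summable F :=
  (summable_sigma_of_nonneg hF).2 ⟨fun _ => .of_finite,
    hb.of_nonneg_of_le (fun _ => tsum_nonneg fun _ => hF _)
      fun i => (tsum_fintype _).trans_le (h i)⟩

lemma tsum_sigma_le_of_sum_le (hF : 0 ≤ F) (hb : Summable b) (h : ∀ i, ∑ x, F ⟨i, x⟩ ≤ b i) :
    ∑' x, F x ≤ ∑' i, b i := by
  have hF_sum := summable_sigma_of_sum_le hF hb h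
  rw [hF_sum.tsum_sigma' fun _ => .of_finite]
  exact ((summable_sigma_of_nonneg hF).1 hF_sum).2.tsum_le_tsum
    (fun i => (tsum_fintype _).trans_le (h i)) hb

end SigmaSum

/-- **The path signature has finite norm**: the family of squared signature
coefficients, indexed by all multi-indices of all lengths, is summable, and
`Σ_{m≥0} Σ_{|I|=m} (S^I(f))² ≤ Σ_{m≥0} N^m L^{2m}/(m!)² < ∞` where
`L = ∫_0^1 ‖f(t)‖ dt`. -/
theorem signature_finite_norm (N : ℕ) (f : ℝ → EuclideanSpace ℝ (Fin N))
    (hf : ContinuousOn f (Set.Icc 0 1)) :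
    Summable (fun I : Σ m : ℕ, (Fin m → Fin N) => (sig f I.2) ^ 2) ∧
    Summable (fun m : ℕ =>
      (N : ℝ) ^ m * (∫ t in (0:ℝ)..1, ‖f t‖) ^ (2 * m) / ((m.factorial : ℝ)) ^ 2) ∧
    (∑' I : Σ m : ℕ, (Fin m → Fin N), (sig f I.2) ^ 2) ≤
      ∑' m : ℕ,
        (N : ℝ) ^ m * (∫ t in (0:ℝ)..1, ‖f t‖) ^ (2 * m) / ((m.factorial : ℝ)) ^ 2 := by
  have hb : Summable fun m : ℕ =>
      (N : ℝ) ^ m * (∫ t in (0:ℝ)..1, ‖f t‖) ^ (2 * m) / (m ! : ℝ) ^ 2 := by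
    convert summable_pow_div_factorial_sq ((N : ℝ) * (∫ t in (0:ℝ)..1, ‖f t‖) ^ 2) using 2
    rw [mul_pow, pow_mul]
  have hF : 0 ≤ fun I : Σ m : ℕ, (Fin m → Fin N) => sig f I.2 ^ 2 := fun _ => sq_nonneg _
  exact ⟨summable_sigma_of_sum_le hF hb (sum_sig_sq_le hf), hb,
    tsum_sigma_le_of_sum_le hF hb (sum_sig_sq_le hf)⟩
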